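/- Under the quantum Drinfeld-Sokolov maps φ_e: (V_m⁰, V_n) ↦ (V_m, V_n), (V_m¹, V_n) ↦ (V_{m−1}, V_n) and φ_f: (V_m⁰, V_n) ↦ (V_{m−1}, V_n), (V_m¹, V_n) ↦ (V_m, V_n) (with V_{−1} := 0), the induced map φ_e ⊕ φ_f, sending (V_m^ε, V_n) ↦ (V_m, V_n) + (V_{m−1}, V_n), is a surjective ring homomorphism from the affine sl₂ generic-level fusion algebra onto the Virasoro generic-level fusion algebra. -/

import Mathlib

/-- Basis product in the affine `sl₂` generic-level fusion algebra on symbols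
`(V r ^ ε, V s)`:
`(V_{r₁}^α, V_{s₁}) ∘ (V_{r₂}^β, V_{s₂}) =
  Σ_{j=|r₁-r₂|}^{r₁+r₂} (V_j^{α+β+r₁+r₂-j}, V_{s₁} ⊗ V_{s₂})`. -/
noncomputable def fusMulB (a b : (ℕ × ZMod 2) × ℕ) : ((ℕ × ZMod 2) × ℕ) →₀ ℤ :=
  ∑ j ∈ Finset.Icc ((a.1.1 - b.1.1) ⊔ (b.1.1 - a.1.1)) (a.1.1 + b.1.1),
    ∑ l ∈ Finset.Icc ((a.2 - b.2) ⊔ (b.2 - a.2)) (a.2 + b.2),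
      if (a.2 + b.2 + l) % 2 = 0 then
        Finsupp.single ((j, a.1.2 + b.1.2 + ((a.1.1 + b.1.1 - j : ℕ) : ZMod 2)), l) 1
      else 0

/-- Basis product in the Virasoro generic-level fusion algebra on symbols
`(V n, V m)`: `(V_{n₁}, V_{m₁}) ∘ (V_{n₂}, V_{m₂}) = (V_{n₁} ⊗ V_{n₂}, V_{m₁} ⊗ V_{m₂})`
with the `sl₂` Clebsch–Gordan rule in each slot. -/
noncomputable def virMulB (a b : ℕ × ℕ) : (ℕ × ℕ) →₀ ℤ :=
  ∑ j ∈ Finset.Icc ((a.1 - b.1) ⊔ (b.1 - a.1)) (a.1 + b.1),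
    ∑ l ∈ Finset.Icc ((a.2 - b.2) ⊔ (b.2 - a.2)) (a.2 + b.2),
      if (a.1 + b.1 + j) % 2 = 0 ∧ (a.2 + b.2 + l) % 2 = 0 then
        Finsupp.single (j, l) 1
      else 0

/-- Bilinear extension of a basis product to the free ℤ-module. -/
noncomputable def liftMul {α : Type} (B : α → α → (α →₀ ℤ)) (x y : α →₀ ℤ) : α →₀ ℤ :=
  x.sum fun a m => y.sum fun b n => (m * n) • B a b

/-- The map induced by the sum of the two quantum Drinfeld–Sokolov reduction
functors `φ_e ⊕ φ_f`: on basis symbols, `(V_m^ε, V_n) ↦ (V_m, V_n) + (V_{m-1}, V_n)`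
(with `V_{-1} = 0`). -/
noncomputable def dsMap : (((ℕ × ZMod 2) × ℕ) →₀ ℤ) →ₗ[ℤ] ((ℕ × ℕ) →₀ ℤ) :=
  Finsupp.lsum ℤ fun a => LinearMap.toSpanSingleton ℤ ((ℕ × ℕ) →₀ ℤ)
    (Finsupp.single (a.1.1, a.2) 1 +
      if a.1.1 = 0 then 0 else Finsupp.single (a.1.1 - 1, a.2) 1)

noncomputable def dsB (r s : ℕ) : (ℕ × ℕ) →₀ ℤ :=
  Finsupp.single (r, s) 1 + if r = 0 then 0 else Finsupp.single (r - 1, s) 1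

lemma dsMap_single (a : (ℕ × ZMod 2) × ℕ) (c : ℤ) :
    dsMap (Finsupp.single a c) = c • dsB a.1.1 a.2 := by
  rw [dsMap, Finsupp.lsum_single, LinearMap.toSpanSingleton_apply, dsB]

lemma liftMul_add_right {α : Type} (B : α → α → (α →₀ ℤ)) (x y y' : α →₀ ℤ) :
    liftMul B x (y + y') = liftMul B x y + liftMul B x y' := by
  unfold liftMul
  rw [← Finsupp.sum_add]
  refine Finsupp.sum_congr fun a _ => ?_
  refine Finsupp.sum_add_index' (fun b => by simp) (fun b n n' => ?_)
  simp [mul_add, add_smul]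

lemma liftMul_add_left {α : Type} (B : α → α → (α →₀ ℤ)) (x x' y : α →₀ ℤ) :
    liftMul B (x + x') y = liftMul B x y + liftMul B x' y := by
  unfold liftMul
  refine Finsupp.sum_add_index' (fun a => by simp) (fun a m m' => ?_)
  simp [add_mul, add_smul, Finsupp.sum_add]

lemma liftMul_single_single {α : Type} (B : α → α → (α →₀ ℤ)) (a b : α) (m n : ℤ) :
    liftMul B (Finsupp.single a m) (Finsupp.single b n) = (m * n) • B a b := by
  unfold liftMul
  rw [Finsupp.sum_single_index (by simp), Finsupp.sum_single_index (by simp)]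

lemma eval_aux (d S d' S' : ℕ) (C : ℕ → ℕ → Prop) [inst : ∀ j l, Decidable (C j l)] (k₁ k₂ : ℕ) :
    (∑ j ∈ Finset.Icc d S, ∑ l ∈ Finset.Icc d' S',
        if C j l then Finsupp.single ((j, l) : ℕ × ℕ) (1 : ℤ) else 0) (k₁, k₂)
      = if d ≤ k₁ ∧ k₁ ≤ S ∧ d' ≤ k₂ ∧ k₂ ≤ S' ∧ C k₁ k₂ then 1 else 0 := by
  simp only [Finsupp.finset_sum_apply, apply_ite (fun f : (ℕ × ℕ) →₀ ℤ => f (k₁, k₂)),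
    Finsupp.single_apply, Finsupp.coe_zero, Pi.zero_apply, Prod.mk.injEq]
  have h : ∀ j ∈ Finset.Icc d S,
      (∑ l ∈ Finset.Icc d' S', if C j l then (if j = k₁ ∧ l = k₂ then (1:ℤ) else 0) else 0)
      = if j = k₁ then (if d' ≤ k₂ ∧ k₂ ≤ S' ∧ C j k₂ then (1:ℤ) else 0) else 0 := by
    intro j _
    by_cases hj : j = k₁
    · rw [if_pos hj]
      rw [show (∑ l ∈ Finset.Icc d' S', if C j l then (if j = k₁ ∧ l = k₂ then (1:ℤ) else 0) else 0)
            = ∑ l ∈ Finset.Icc d' S', if l = k₂ then (if C j l then (1:ℤ) else 0) else 0 from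
          Finset.sum_congr rfl fun l _ => by split_ifs <;> simp_all,
        Finset.sum_ite_eq' (Finset.Icc d' S') k₂ (fun l => if C j l then (1:ℤ) else 0)]
      simp only [Finset.mem_Icc]
      split_ifs <;> simp_all
    · rw [if_neg hj]
      refine Finset.sum_eq_zero fun l _ => by split_ifs <;> simp_all
  rw [Finset.sum_congr rfl h,
    Finset.sum_ite_eq' (Finset.Icc d S) k₁
      (fun j => if d' ≤ k₂ ∧ k₂ ≤ S' ∧ C j k₂ then (1:ℤ) else 0)]
  simp only [Finset.mem_Icc]
  split_ifs <;> tauto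

lemma eval_aux' (d S d' S' : ℕ) (P : ℕ → Prop) [inst : ∀ l, Decidable (P l)] (k₁ k₂ : ℕ) :
    (∑ j ∈ Finset.Icc d S, ∑ l ∈ Finset.Icc d' S',
        if P l then (if j = 0 then (0 : (ℕ × ℕ) →₀ ℤ) else Finsupp.single (j - 1, l) 1) else 0) (k₁, k₂)
      = if d ≤ k₁ + 1 ∧ k₁ + 1 ≤ S ∧ d' ≤ k₂ ∧ k₂ ≤ S' ∧ P k₂ then 1 else 0 := by
  simp only [Finsupp.finset_sum_apply, apply_ite (fun f : (ℕ × ℕ) →₀ ℤ => f (k₁, k₂)),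
    Finsupp.single_apply, Finsupp.coe_zero, Pi.zero_apply, Prod.mk.injEq]
  have h : ∀ j ∈ Finset.Icc d S,
      (∑ l ∈ Finset.Icc d' S',
          if P l then (if j = 0 then (0:ℤ) else if j - 1 = k₁ ∧ l = k₂ then 1 else 0) else 0)
      = if j = k₁ + 1 then (if d' ≤ k₂ ∧ k₂ ≤ S' ∧ P k₂ then (1:ℤ) else 0) else 0 := by
    intro j _
    by_cases hj : j = k₁ + 1
    · rw [if_pos hj]
      rw [show (∑ l ∈ Finset.Icc d' S',
            if P l then (if j = 0 then (0:ℤ) else if j - 1 = k₁ ∧ l = k₂ then 1 else 0) else 0)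
          = ∑ l ∈ Finset.Icc d' S', if l = k₂ then (if P l then (1:ℤ) else 0) else 0 from
          Finset.sum_congr rfl fun l _ => by split_ifs <;> simp_all <;> omega,
        Finset.sum_ite_eq' (Finset.Icc d' S') k₂ (fun l => if P l then (1:ℤ) else 0)]
      simp only [Finset.mem_Icc]
      split_ifs <;> simp_all
    · rw [if_neg hj]
      refine Finset.sum_eq_zero fun l _ => ?_
      split_ifs <;> simp_all <;> omega
  rw [Finset.sum_congr rfl h,
    Finset.sum_ite_eq' (Finset.Icc d S) (k₁ + 1)
      (fun _ => if d' ≤ k₂ ∧ k₂ ≤ S' ∧ P k₂ then (1:ℤ) else 0)]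
  simp only [Finset.mem_Icc]
  split_ifs <;> tauto

lemma arith00 (s₁ s₂ k₁ k₂ : ℕ) :
    ((if (0 - 0) ⊔ (0 - 0) ≤ k₁ ∧ k₁ ≤ 0 + 0 ∧ (s₁ - s₂) ⊔ (s₂ - s₁) ≤ k₂ ∧ k₂ ≤ s₁ + s₂ ∧ (s₁ + s₂ + k₂) % 2 = 0 then (1:ℤ) else 0) + (if (0 - 0) ⊔ (0 - 0) ≤ k₁ + 1 ∧ k₁ + 1 ≤ 0 + 0 ∧ (s₁ - s₂) ⊔ (s₂ - s₁) ≤ k₂ ∧ k₂ ≤ s₁ + s₂ ∧ (s₁ + s₂ + k₂) % 2 = 0 then (1:ℤ) else 0)) = (if (0 - 0) ⊔ (0 - 0) ≤ k₁ ∧ k₁ ≤ 0 + 0 ∧ (s₁ - s₂) ⊔ (s₂ - s₁) ≤ k₂ ∧ k₂ ≤ s₁ + s₂ ∧ (0 + 0 + k₁) % 2 = 0 ∧ (s₁ + s₂ + k₂) % 2 = 0 then (1:ℤ) else 0) := by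
  rw [if_neg (show ¬((0 - 0) ⊔ (0 - 0) ≤ k₁ + 1 ∧ k₁ + 1 ≤ 0 + 0 ∧ (s₁ - s₂) ⊔ (s₂ - s₁) ≤ k₂ ∧ k₂ ≤ s₁ + s₂ ∧ (s₁ + s₂ + k₂) % 2 = 0) by omega),
      if_congr (show ((0 - 0) ⊔ (0 - 0) ≤ k₁ ∧ k₁ ≤ 0 + 0 ∧ (s₁ - s₂) ⊔ (s₂ - s₁) ≤ k₂ ∧ k₂ ≤ s₁ + s₂ ∧ (s₁ + s₂ + k₂) % 2 = 0) ↔ ((0 - 0) ⊔ (0 - 0) ≤ k₁ ∧ k₁ ≤ 0 + 0 ∧ (s₁ - s₂) ⊔ (s₂ - s₁) ≤ k₂ ∧ k₂ ≤ s₁ + s₂ ∧ (0 + 0 + k₁) % 2 = 0 ∧ (s₁ + s₂ + k₂) % 2 = 0) by omega) rfl rfl]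
  ring

lemma arith01 (r₂ s₁ s₂ k₁ k₂ : ℕ) (h2 : r₂ > 0) :
    ((if (0 - r₂) ⊔ (r₂ - 0) ≤ k₁ ∧ k₁ ≤ 0 + r₂ ∧ (s₁ - s₂) ⊔ (s₂ - s₁) ≤ k₂ ∧ k₂ ≤ s₁ + s₂ ∧ (s₁ + s₂ + k₂) % 2 = 0 then (1:ℤ) else 0) + (if (0 - r₂) ⊔ (r₂ - 0) ≤ k₁ + 1 ∧ k₁ + 1 ≤ 0 + r₂ ∧ (s₁ - s₂) ⊔ (s₂ - s₁) ≤ k₂ ∧ k₂ ≤ s₁ + s₂ ∧ (s₁ + s₂ + k₂) % 2 = 0 then (1:ℤ) else 0)) = ((if (0 - r₂) ⊔ (r₂ - 0) ≤ k₁ ∧ k₁ ≤ 0 + r₂ ∧ (s₁ - s₂) ⊔ (s₂ - s₁) ≤ k₂ ∧ k₂ ≤ s₁ + s₂ ∧ (0 + r₂ + k₁) % 2 = 0 ∧ (s₁ + s₂ + k₂) % 2 = 0 then (1:ℤ) else 0) + (if (0 - (r₂ - 1)) ⊔ (r₂ - 1 - 0) ≤ k₁ ∧ k₁ ≤ 0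 + (r₂ - 1) ∧ (s₁ - s₂) ⊔ (s₂ - s₁) ≤ k₂ ∧ k₂ ≤ s₁ + s₂ ∧ (0 + (r₂ - 1) + k₁) % 2 = 0 ∧ (s₁ + s₂ + k₂) % 2 = 0 then (1:ℤ) else 0)) := by
  rcases Nat.even_or_odd (r₂ + k₁) with hp | hp
  · rw [Nat.even_iff] at hp
    rw [if_neg (show ¬((0 - r₂) ⊔ (r₂ - 0) ≤ k₁ + 1 ∧ k₁ + 1 ≤ 0 + r₂ ∧ (s₁ - s₂) ⊔ (s₂ - s₁) ≤ k₂ ∧ k₂ ≤ s₁ + s₂ ∧ (s₁ + s₂ + k₂) % 2 = 0) by omega),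
        if_neg (show ¬((0 - (r₂ - 1)) ⊔ (r₂ - 1 - 0) ≤ k₁ ∧ k₁ ≤ 0 + (r₂ - 1) ∧ (s₁ - s₂) ⊔ (s₂ - s₁) ≤ k₂ ∧ k₂ ≤ s₁ + s₂ ∧ (0 + (r₂ - 1) + k₁) % 2 = 0 ∧ (s₁ + s₂ + k₂) % 2 = 0) by omega),
        if_congr (show ((0 - r₂) ⊔ (r₂ - 0) ≤ k₁ ∧ k₁ ≤ 0 + r₂ ∧ (s₁ - s₂) ⊔ (s₂ - s₁) ≤ k₂ ∧ k₂ ≤ s₁ + s₂ ∧ (s₁ + s₂ + k₂) % 2 = 0) ↔ ((0 - r₂) ⊔ (r₂ - 0) ≤ k₁ ∧ k₁ ≤ 0 + r₂ ∧ (s₁ - s₂) ⊔ (s₂ - s₁) ≤ k₂ ∧ k₂ ≤ s₁ + s₂ ∧ (0 + r₂ + k₁) % 2 = 0 ∧ (s₁ + s₂ + k₂) % 2 = 0) by omega) rfl rfl]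
    try ring
  · rw [Nat.odd_iff] at hp
    rw [if_neg (show ¬((0 - r₂) ⊔ (r₂ - 0) ≤ k₁ ∧ k₁ ≤ 0 + r₂ ∧ (s₁ - s₂) ⊔ (s₂ - s₁) ≤ k₂ ∧ k₂ ≤ s₁ + s₂ ∧ (s₁ + s₂ + k₂) % 2 = 0) by omega),
        if_neg (show ¬((0 - r₂) ⊔ (r₂ - 0) ≤ k₁ ∧ k₁ ≤ 0 + r₂ ∧ (s₁ - s₂) ⊔ (s₂ - s₁) ≤ k₂ ∧ k₂ ≤ s₁ + s₂ ∧ (0 + r₂ + k₁) % 2 = 0 ∧ (s₁ + s₂ + k₂) % 2 = 0) by omega),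
        if_congr (show ((0 - r₂) ⊔ (r₂ - 0) ≤ k₁ + 1 ∧ k₁ + 1 ≤ 0 + r₂ ∧ (s₁ - s₂) ⊔ (s₂ - s₁) ≤ k₂ ∧ k₂ ≤ s₁ + s₂ ∧ (s₁ + s₂ + k₂) % 2 = 0) ↔ ((0 - (r₂ - 1)) ⊔ (r₂ - 1 - 0) ≤ k₁ ∧ k₁ ≤ 0 + (r₂ - 1) ∧ (s₁ - s₂) ⊔ (s₂ - s₁) ≤ k₂ ∧ k₂ ≤ s₁ + s₂ ∧ (0 + (r₂ - 1) + k₁) % 2 = 0 ∧ (s₁ + s₂ + k₂) % 2 = 0) by omega) rfl rfl]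
    try ring

lemma arith10 (r₁ s₁ s₂ k₁ k₂ : ℕ) (h1 : r₁ > 0) :
    ((if (r₁ - 0) ⊔ (0 - r₁) ≤ k₁ ∧ k₁ ≤ r₁ + 0 ∧ (s₁ - s₂) ⊔ (s₂ - s₁) ≤ k₂ ∧ k₂ ≤ s₁ + s₂ ∧ (s₁ + s₂ + k₂) % 2 = 0 then (1:ℤ) else 0) + (if (r₁ - 0) ⊔ (0 - r₁) ≤ k₁ + 1 ∧ k₁ + 1 ≤ r₁ + 0 ∧ (s₁ - s₂) ⊔ (s₂ - s₁) ≤ k₂ ∧ k₂ ≤ s₁ + s₂ ∧ (s₁ + s₂ + k₂) % 2 = 0 then (1:ℤ) else 0)) = ((if (r₁ - 0) ⊔ (0 - r₁) ≤ k₁ ∧ k₁ ≤ r₁ + 0 ∧ (s₁ - s₂) ⊔ (s₂ - s₁) ≤ k₂ ∧ k₂ ≤ s₁ + s₂ ∧ (r₁ + 0 + k₁) % 2 = 0 ∧ (s₁ + s₂ + k₂) % 2 = 0 then (1:ℤ) else 0) + (if (r₁ - 1 - 0) ⊔ (0 - (r₁ - 1)) ≤ k₁ ∧ k₁ ≤ r₁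 - 1 + 0 ∧ (s₁ - s₂) ⊔ (s₂ - s₁) ≤ k₂ ∧ k₂ ≤ s₁ + s₂ ∧ (r₁ - 1 + 0 + k₁) % 2 = 0 ∧ (s₁ + s₂ + k₂) % 2 = 0 then (1:ℤ) else 0)) := by
  rcases Nat.even_or_odd (r₁ + k₁) with hp | hp
  · rw [Nat.even_iff] at hp
    rw [if_neg (show ¬((r₁ - 0) ⊔ (0 - r₁) ≤ k₁ + 1 ∧ k₁ + 1 ≤ r₁ + 0 ∧ (s₁ - s₂) ⊔ (s₂ - s₁) ≤ k₂ ∧ k₂ ≤ s₁ + s₂ ∧ (s₁ + s₂ + k₂) % 2 = 0) by omega),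
        if_neg (show ¬((r₁ - 1 - 0) ⊔ (0 - (r₁ - 1)) ≤ k₁ ∧ k₁ ≤ r₁ - 1 + 0 ∧ (s₁ - s₂) ⊔ (s₂ - s₁) ≤ k₂ ∧ k₂ ≤ s₁ + s₂ ∧ (r₁ - 1 + 0 + k₁) % 2 = 0 ∧ (s₁ + s₂ + k₂) % 2 = 0) by omega),
        if_congr (show ((r₁ - 0) ⊔ (0 - r₁) ≤ k₁ ∧ k₁ ≤ r₁ + 0 ∧ (s₁ - s₂) ⊔ (s₂ - s₁) ≤ k₂ ∧ k₂ ≤ s₁ + s₂ ∧ (s₁ + s₂ + k₂) % 2 = 0) ↔ ((r₁ - 0) ⊔ (0 - r₁) ≤ k₁ ∧ k₁ ≤ r₁ + 0 ∧ (s₁ - s₂) ⊔ (s₂ - s₁) ≤ k₂ ∧ k₂ ≤ s₁ + s₂ ∧ (r₁ + 0 + k₁) % 2 = 0 ∧ (s₁ + s₂ + k₂) % 2 = 0) by omega) rfl rfl]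
    try ring
  · rw [Nat.odd_iff] at hp
    rw [if_neg (show ¬((r₁ - 0) ⊔ (0 - r₁) ≤ k₁ ∧ k₁ ≤ r₁ + 0 ∧ (s₁ - s₂) ⊔ (s₂ - s₁) ≤ k₂ ∧ k₂ ≤ s₁ + s₂ ∧ (s₁ + s₂ + k₂) % 2 = 0) by omega),
        if_neg (show ¬((r₁ - 0) ⊔ (0 - r₁) ≤ k₁ ∧ k₁ ≤ r₁ + 0 ∧ (s₁ - s₂) ⊔ (s₂ - s₁) ≤ k₂ ∧ k₂ ≤ s₁ + s₂ ∧ (r₁ + 0 + k₁) % 2 = 0 ∧ (s₁ + s₂ + k₂) % 2 = 0) by omega),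
        if_congr (show ((r₁ - 0) ⊔ (0 - r₁) ≤ k₁ + 1 ∧ k₁ + 1 ≤ r₁ + 0 ∧ (s₁ - s₂) ⊔ (s₂ - s₁) ≤ k₂ ∧ k₂ ≤ s₁ + s₂ ∧ (s₁ + s₂ + k₂) % 2 = 0) ↔ ((r₁ - 1 - 0) ⊔ (0 - (r₁ - 1)) ≤ k₁ ∧ k₁ ≤ r₁ - 1 + 0 ∧ (s₁ - s₂) ⊔ (s₂ - s₁) ≤ k₂ ∧ k₂ ≤ s₁ + s₂ ∧ (r₁ - 1 + 0 + k₁) % 2 = 0 ∧ (s₁ + s₂ + k₂) % 2 = 0) by omega) rfl rfl]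
    try ring

set_option maxHeartbeats 3000000 in
lemma arith11 (r₁ r₂ s₁ s₂ k₁ k₂ : ℕ) (h1 : r₁ > 0) (h2 : r₂ > 0) :
    ((if (r₁ - r₂) ⊔ (r₂ - r₁) ≤ k₁ ∧ k₁ ≤ r₁ + r₂ ∧ (s₁ - s₂) ⊔ (s₂ - s₁) ≤ k₂ ∧ k₂ ≤ s₁ + s₂ ∧ (s₁ + s₂ + k₂) % 2 = 0 then (1:ℤ) else 0) + (if (r₁ - r₂) ⊔ (r₂ - r₁) ≤ k₁ + 1 ∧ k₁ + 1 ≤ r₁ + r₂ ∧ (s₁ - s₂) ⊔ (s₂ - s₁) ≤ k₂ ∧ k₂ ≤ s₁ + s₂ ∧ (s₁ + s₂ + k₂) % 2 = 0 then (1:ℤ) else 0)) = (((if (r₁ - r₂) ⊔ (r₂ - r₁) ≤ k₁ ∧ k₁ ≤ r₁ + r₂ ∧ (s₁ - s₂) ⊔ (s₂ - s₁) ≤ k₂ ∧ k₂ ≤ s₁ + s₂ ∧ (r₁ + r₂ + k₁) % 2 = 0 ∧ (s₁ + s₂ + k₂) % 2 = 0 then (1:ℤ) else 0) + (if (r₁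 - (r₂ - 1)) ⊔ (r₂ - 1 - r₁) ≤ k₁ ∧ k₁ ≤ r₁ + (r₂ - 1) ∧ (s₁ - s₂) ⊔ (s₂ - s₁) ≤ k₂ ∧ k₂ ≤ s₁ + s₂ ∧ (r₁ + (r₂ - 1) + k₁) % 2 = 0 ∧ (s₁ + s₂ + k₂) % 2 = 0 then (1:ℤ) else 0)) + ((if (r₁ - 1 - r₂) ⊔ (r₂ - (r₁ - 1)) ≤ k₁ ∧ k₁ ≤ r₁ - 1 + r₂ ∧ (s₁ - s₂) ⊔ (s₂ - s₁) ≤ k₂ ∧ k₂ ≤ s₁ + s₂ ∧ (r₁ - 1 + r₂ + k₁) % 2 = 0 ∧ (s₁ + s₂ + k₂) % 2 = 0 then (1:ℤ) else 0) + (if (r₁ - 1 - (r₂ - 1)) ⊔ (r₂ - 1 - (r₁ - 1)) ≤ k₁ ∧ k₁ ≤ r₁ - 1 + (r₂ - 1) ∧ (s₁ - s₂) ⊔ (s₂ - s₁) ≤ k₂ ∧ k₂ ≤ s₁ + s₂ ∧ (r₁ - 1 + (r₂ - 1) + k₁) % 2 = 0 ∧ (s₁ + s₂ + k₂) % 2 =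 0 then (1:ℤ) else 0))) := by
  rcases Nat.even_or_odd (r₁ + r₂ + k₁) with hp | hp
  · rw [Nat.even_iff] at hp
    rw [if_neg (show ¬((r₁ - (r₂ - 1)) ⊔ (r₂ - 1 - r₁) ≤ k₁ ∧ k₁ ≤ r₁ + (r₂ - 1) ∧ (s₁ - s₂) ⊔ (s₂ - s₁) ≤ k₂ ∧ k₂ ≤ s₁ + s₂ ∧ (r₁ + (r₂ - 1) + k₁) % 2 = 0 ∧ (s₁ + s₂ + k₂) % 2 = 0) by omega),
        if_neg (show ¬((r₁ - 1 - r₂) ⊔ (r₂ - (r₁ - 1)) ≤ k₁ ∧ k₁ ≤ r₁ - 1 + r₂ ∧ (s₁ - s₂) ⊔ (s₂ - s₁) ≤ k₂ ∧ k₂ ≤ s₁ + s₂ ∧ (r₁ - 1 + r₂ + k₁) % 2 = 0 ∧ (s₁ + s₂ + k₂) % 2 = 0) by omega),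
        if_congr (show ((r₁ - r₂) ⊔ (r₂ - r₁) ≤ k₁ ∧ k₁ ≤ r₁ + r₂ ∧ (s₁ - s₂) ⊔ (s₂ - s₁) ≤ k₂ ∧ k₂ ≤ s₁ + s₂ ∧ (s₁ + s₂ + k₂) % 2 = 0) ↔ ((r₁ - r₂) ⊔ (r₂ - r₁) ≤ k₁ ∧ k₁ ≤ r₁ + r₂ ∧ (s₁ - s₂) ⊔ (s₂ - s₁) ≤ k₂ ∧ k₂ ≤ s₁ + s₂ ∧ (r₁ + r₂ + k₁) % 2 = 0 ∧ (s₁ + s₂ + k₂) % 2 = 0) by omega) rfl rfl,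
        if_congr (show ((r₁ - r₂) ⊔ (r₂ - r₁) ≤ k₁ + 1 ∧ k₁ + 1 ≤ r₁ + r₂ ∧ (s₁ - s₂) ⊔ (s₂ - s₁) ≤ k₂ ∧ k₂ ≤ s₁ + s₂ ∧ (s₁ + s₂ + k₂) % 2 = 0) ↔ ((r₁ - 1 - (r₂ - 1)) ⊔ (r₂ - 1 - (r₁ - 1)) ≤ k₁ ∧ k₁ ≤ r₁ - 1 + (r₂ - 1) ∧ (s₁ - s₂) ⊔ (s₂ - s₁) ≤ k₂ ∧ k₂ ≤ s₁ + s₂ ∧ (r₁ - 1 + (r₂ - 1) + k₁) % 2 = 0 ∧ (s₁ + s₂ + k₂) % 2 = 0) by omega) rfl rfl]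
    try ring
  · rw [Nat.odd_iff] at hp
    rw [if_neg (show ¬((r₁ - r₂) ⊔ (r₂ - r₁) ≤ k₁ ∧ k₁ ≤ r₁ + r₂ ∧ (s₁ - s₂) ⊔ (s₂ - s₁) ≤ k₂ ∧ k₂ ≤ s₁ + s₂ ∧ (r₁ + r₂ + k₁) % 2 = 0 ∧ (s₁ + s₂ + k₂) % 2 = 0) by omega),
        if_neg (show ¬((r₁ - 1 - (r₂ - 1)) ⊔ (r₂ - 1 - (r₁ - 1)) ≤ k₁ ∧ k₁ ≤ r₁ - 1 + (r₂ - 1) ∧ (s₁ - s₂) ⊔ (s₂ - s₁) ≤ k₂ ∧ k₂ ≤ s₁ + s₂ ∧ (r₁ - 1 + (r₂ - 1) + k₁) % 2 = 0 ∧ (s₁ + s₂ + k₂) % 2 = 0) by omega)]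
    rcases le_total r₁ r₂ with hr | hr
    · rw [if_congr (show ((r₁ - r₂) ⊔ (r₂ - r₁) ≤ k₁ ∧ k₁ ≤ r₁ + r₂ ∧ (s₁ - s₂) ⊔ (s₂ - s₁) ≤ k₂ ∧ k₂ ≤ s₁ + s₂ ∧ (s₁ + s₂ + k₂) % 2 = 0) ↔ ((r₁ - 1 - r₂) ⊔ (r₂ - (r₁ - 1)) ≤ k₁ ∧ k₁ ≤ r₁ - 1 + r₂ ∧ (s₁ - s₂) ⊔ (s₂ - s₁) ≤ k₂ ∧ k₂ ≤ s₁ + s₂ ∧ (r₁ - 1 + r₂ + k₁) % 2 = 0 ∧ (s₁ + s₂ + k₂) % 2 = 0) by omega) rfl rfl,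
          if_congr (show ((r₁ - r₂) ⊔ (r₂ - r₁) ≤ k₁ + 1 ∧ k₁ + 1 ≤ r₁ + r₂ ∧ (s₁ - s₂) ⊔ (s₂ - s₁) ≤ k₂ ∧ k₂ ≤ s₁ + s₂ ∧ (s₁ + s₂ + k₂) % 2 = 0) ↔ ((r₁ - (r₂ - 1)) ⊔ (r₂ - 1 - r₁) ≤ k₁ ∧ k₁ ≤ r₁ + (r₂ - 1) ∧ (s₁ - s₂) ⊔ (s₂ - s₁) ≤ k₂ ∧ k₂ ≤ s₁ + s₂ ∧ (r₁ + (r₂ - 1) + k₁) % 2 = 0 ∧ (s₁ + s₂ + k₂) % 2 = 0) by omega) rfl rfl]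
      try ring
    · rw [if_congr (show ((r₁ - r₂) ⊔ (r₂ - r₁) ≤ k₁ ∧ k₁ ≤ r₁ + r₂ ∧ (s₁ - s₂) ⊔ (s₂ - s₁) ≤ k₂ ∧ k₂ ≤ s₁ + s₂ ∧ (s₁ + s₂ + k₂) % 2 = 0) ↔ ((r₁ - (r₂ - 1)) ⊔ (r₂ - 1 - r₁) ≤ k₁ ∧ k₁ ≤ r₁ + (r₂ - 1) ∧ (s₁ - s₂) ⊔ (s₂ - s₁) ≤ k₂ ∧ k₂ ≤ s₁ + s₂ ∧ (r₁ + (r₂ - 1) + k₁) % 2 = 0 ∧ (s₁ + s₂ + k₂) % 2 = 0) by omega) rfl rfl,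
          if_congr (show ((r₁ - r₂) ⊔ (r₂ - r₁) ≤ k₁ + 1 ∧ k₁ + 1 ≤ r₁ + r₂ ∧ (s₁ - s₂) ⊔ (s₂ - s₁) ≤ k₂ ∧ k₂ ≤ s₁ + s₂ ∧ (s₁ + s₂ + k₂) % 2 = 0) ↔ ((r₁ - 1 - r₂) ⊔ (r₂ - (r₁ - 1)) ≤ k₁ ∧ k₁ ≤ r₁ - 1 + r₂ ∧ (s₁ - s₂) ⊔ (s₂ - s₁) ≤ k₂ ∧ k₂ ≤ s₁ + s₂ ∧ (r₁ - 1 + r₂ + k₁) % 2 = 0 ∧ (s₁ + s₂ + k₂) % 2 = 0) by omega) rfl rfl]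
      try ring


lemma core (r₁ r₂ s₁ s₂ : ℕ) (α β : ZMod 2) :
    dsMap (fusMulB ((r₁, α), s₁) ((r₂, β), s₂)) = liftMul virMulB (dsB r₁ s₁) (dsB r₂ s₂) := by
  have hL : dsMap (fusMulB ((r₁, α), s₁) ((r₂, β), s₂)) =
      (∑ j ∈ Finset.Icc ((r₁ - r₂) ⊔ (r₂ - r₁)) (r₁ + r₂),
        ∑ l ∈ Finset.Icc ((s₁ - s₂) ⊔ (s₂ - s₁)) (s₁ + s₂),
          if (s₁ + s₂ + l) % 2 = 0 then Finsupp.single ((j, l) : ℕ × ℕ) (1:ℤ) else 0)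
      + (∑ j ∈ Finset.Icc ((r₁ - r₂) ⊔ (r₂ - r₁)) (r₁ + r₂),
        ∑ l ∈ Finset.Icc ((s₁ - s₂) ⊔ (s₂ - s₁)) (s₁ + s₂),
          if (s₁ + s₂ + l) % 2 = 0 then
            (if j = 0 then (0 : (ℕ × ℕ) →₀ ℤ) else Finsupp.single (j - 1, l) 1) else 0) := by
    simp only [fusMulB]
    rw [map_sum, ← Finset.sum_add_distrib]
    refine Finset.sum_congr rfl fun j _ => ?_
    rw [map_sum, ← Finset.sum_add_distrib]
    refine Finset.sum_congr rfl fun l _ => ?_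
    rw [apply_ite (⇑dsMap), map_zero, dsMap_single, one_smul, dsB]
    split_ifs <;> simp
  rw [hL]
  rcases Nat.eq_zero_or_pos r₁ with h1 | h1 <;> rcases Nat.eq_zero_or_pos r₂ with h2 | h2
  · -- r₁ = 0, r₂ = 0
    subst h1; subst h2
    rw [show dsB 0 s₁ = Finsupp.single ((0:ℕ), s₁) 1 by simp [dsB],
        show dsB 0 s₂ = Finsupp.single ((0:ℕ), s₂) 1 by simp [dsB],
        liftMul_single_single]
    ext ⟨k₁, k₂⟩
    simp only [Finsupp.add_apply, eval_aux', eval_aux, one_mul, one_smul, virMulB]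
    exact arith00 s₁ s₂ k₁ k₂
  · -- r₁ = 0, r₂ > 0
    subst h1
    rw [show dsB 0 s₁ = Finsupp.single ((0:ℕ), s₁) 1 by simp [dsB],
        show dsB r₂ s₂ = Finsupp.single (r₂, s₂) 1 + Finsupp.single (r₂ - 1, s₂) 1 by
          rw [dsB, if_neg (by omega : ¬ r₂ = 0)],
        liftMul_add_right, liftMul_single_single, liftMul_single_single]
    ext ⟨k₁, k₂⟩
    simp only [Finsupp.add_apply, eval_aux', eval_aux, one_mul, one_smul, virMulB]
    exact arith01 r₂ s₁ s₂ k₁ k₂ h2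
  · -- r₁ > 0, r₂ = 0
    subst h2
    rw [show dsB r₁ s₁ = Finsupp.single (r₁, s₁) 1 + Finsupp.single (r₁ - 1, s₁) 1 by
          rw [dsB, if_neg (by omega : ¬ r₁ = 0)],
        show dsB 0 s₂ = Finsupp.single ((0:ℕ), s₂) 1 by simp [dsB],
        liftMul_add_left, liftMul_single_single, liftMul_single_single]
    ext ⟨k₁, k₂⟩
    simp only [Finsupp.add_apply, eval_aux', eval_aux, one_mul, one_smul, virMulB]
    exact arith10 r₁ s₁ s₂ k₁ k₂ h1
  · -- r₁ > 0, r₂ > 0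
    rw [show dsB r₁ s₁ = Finsupp.single (r₁, s₁) 1 + Finsupp.single (r₁ - 1, s₁) 1 by
          rw [dsB, if_neg (by omega : ¬ r₁ = 0)],
        show dsB r₂ s₂ = Finsupp.single (r₂, s₂) 1 + Finsupp.single (r₂ - 1, s₂) 1 by
          rw [dsB, if_neg (by omega : ¬ r₂ = 0)],
        liftMul_add_left, liftMul_add_right, liftMul_add_right,
        liftMul_single_single, liftMul_single_single, liftMul_single_single,
        liftMul_single_single]
    ext ⟨k₁, k₂⟩
    simp only [Finsupp.add_apply, eval_aux', eval_aux, one_mul, one_smul, virMulB]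
    exact arith11 r₁ r₂ s₁ s₂ k₁ k₂ h1 h2

lemma liftMul_zero_left {α : Type} (B : α → α → (α →₀ ℤ)) (y : α →₀ ℤ) :
    liftMul B 0 y = 0 := by
  simp [liftMul]

lemma liftMul_zero_right {α : Type} (B : α → α → (α →₀ ℤ)) (x : α →₀ ℤ) :
    liftMul B x 0 = 0 := by
  simp [liftMul]

lemma liftMul_smul_left {α : Type} (B : α → α → (α →₀ ℤ)) (c : ℤ) (x y : α →₀ ℤ) :
    liftMul B (c • x) y = c • liftMul B x y := by
  unfold liftMul
  rw [Finsupp.sum_smul_index' (fun a => by simp), Finsupp.smul_sum]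
  refine Finsupp.sum_congr fun a _ => ?_
  rw [Finsupp.smul_sum]
  refine Finsupp.sum_congr fun b _ => ?_
  rw [smul_smul, smul_eq_mul]
  ring_nf

lemma liftMul_smul_right {α : Type} (B : α → α → (α →₀ ℤ)) (c : ℤ) (x y : α →₀ ℤ) :
    liftMul B x (c • y) = c • liftMul B x y := by
  unfold liftMul
  rw [Finsupp.smul_sum]
  refine Finsupp.sum_congr fun a m => ?_
  rw [Finsupp.sum_smul_index' (fun b => by simp), Finsupp.smul_sum]
  refine Finsupp.sum_congr fun b _ => ?_
  rw [smul_smul, smul_eq_mul]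
  ring_nf

lemma key_single_single (a b : (ℕ × ZMod 2) × ℕ) (m n : ℤ) :
    dsMap (liftMul fusMulB (Finsupp.single a m) (Finsupp.single b n)) =
      liftMul virMulB (dsMap (Finsupp.single a m)) (dsMap (Finsupp.single b n)) := by
  obtain ⟨⟨r₁, α⟩, s₁⟩ := a
  obtain ⟨⟨r₂, β⟩, s₂⟩ := b
  rw [liftMul_single_single, map_smul, dsMap_single, dsMap_single,
    liftMul_smul_left, liftMul_smul_right, smul_smul, core]

lemma key_single_left (a : (ℕ × ZMod 2) × ℕ) (m : ℤ) (y : ((ℕ × ZMod 2) × ℕ) →₀ ℤ) :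
    dsMap (liftMul fusMulB (Finsupp.single a m) y) =
      liftMul virMulB (dsMap (Finsupp.single a m)) (dsMap y) := by
  induction y using Finsupp.induction with
  | zero => rw [liftMul_zero_right, map_zero, liftMul_zero_right]
  | single_add b n f _ _ ih =>
      rw [liftMul_add_right, map_add, map_add, liftMul_add_right, ih, key_single_single]

lemma key_mul (x y : ((ℕ × ZMod 2) × ℕ) →₀ ℤ) :
    dsMap (liftMul fusMulB x y) = liftMul virMulB (dsMap x) (dsMap y) := by
  induction x using Finsupp.induction with
  | zero => rw [liftMul_zero_left, map_zero, liftMul_zero_left]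
  | single_add a m f _ _ ih =>
      rw [liftMul_add_left, map_add, map_add, liftMul_add_left, ih, key_single_left]

lemma surj_single (m n : ℕ) (c : ℤ) :
    ∃ x, dsMap x = Finsupp.single (m, n) c := by
  induction m with
  | zero =>
      refine ⟨Finsupp.single ((0, (0 : ZMod 2)), n) c, ?_⟩
      rw [dsMap_single]
      simp [dsB, Finsupp.smul_single]
  | succ m ih =>
      obtain ⟨x, hx⟩ := ih
      refine ⟨Finsupp.single ((m + 1, (0 : ZMod 2)), n) c - x, ?_⟩
      rw [map_sub, hx, dsMap_single]
      simp only [dsB, Nat.add_sub_cancel]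
      rw [if_neg (by omega : ¬ m + 1 = 0)]
      rw [smul_add, Finsupp.smul_single, Finsupp.smul_single, smul_eq_mul, mul_one]
      abel

lemma dsMap_surj : Function.Surjective dsMap := by
  intro v
  induction v using Finsupp.induction with
  | zero => exact ⟨0, map_zero _⟩
  | single_add p c f _ _ ih =>
      obtain ⟨x, hx⟩ := ih
      obtain ⟨y, hy⟩ := surj_single p.1 p.2 c
      exact ⟨y + x, by rw [map_add, hx, hy]⟩

/-- **Drinfeld–Sokolov reduction on fusion algebras:** the ℤ-linear map
`(V_m^ε, V_n) ↦ (V_m, V_n) + (V_{m-1}, V_n)` induced by `φ_e ⊕ φ_f` is a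
surjective, unital, multiplicative (hence ring) homomorphism from the affine
`sl₂` generic-level fusion algebra onto the Virasoro generic-level fusion
algebra. -/
theorem stmt13 :
    Function.Surjective dsMap ∧
    dsMap (Finsupp.single ((0, (0 : ZMod 2)), 0) 1) = Finsupp.single (0, 0) 1 ∧
    ∀ x y : ((ℕ × ZMod 2) × ℕ) →₀ ℤ,
      dsMap (liftMul fusMulB x y) = liftMul virMulB (dsMap x) (dsMap y) := by
  refine ⟨dsMap_surj, ?_, key_mul⟩
  rw [dsMap_single]
  simp [dsB]
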